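/- arXiv:2306.08843 — 3 statements merged into one kernel-verified Lean document; each statement's English description precedes it below -/
import Mathlib

section
/- Let G be a connected simple graph on a finite nonempty vertex type V, let s ∈ V, and let ecc(s) = max over vertices v of dist(s, v) be the eccentricity of s. Define the predecessor set of each vertex v as prec(v) = { u : G.Adj u v and dist(s, v) < dist(s, u) } (edges oriented toward s). Let α be a type of messages, let F : V → (V → α) → α depend only on the values at the predecessors (for all v and f, g : V → α, if f u = g u for every u ∈ prec v then F v f = F v g), and let m : ℕ → V → α satisfy m (t+1) v = F v (m t). Then the message passing process converges within ecc(s) + 1 iterations: for every vertex v and every t ≥ ecc(s) + 1, m t v = m (ecc(s) + 1) v. -/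
/-- Message passing on the orientation of a connected graph toward a sink `s`
(edges oriented from the vertex farther from `s` to the vertex closer to `s`),
where each agent's update depends only on its predecessors' messages, converges
within `ecc s + 1` iterations, `ecc s` being the eccentricity of `s`. -/
theorem message_passing_converges_within_eccentricity
    {V : Type*} [Fintype V] [Nonempty V]
    (G : SimpleGraph V) (hG : G.Connected) (s : V)
    {α : Type*} (F : V → (V → α) → α)
    (hF : ∀ v (f g : V → α),
      (∀ u, G.Adj u v → G.dist s v < G.dist s u → f u = g u) → F v f = F v g)
    (m : ℕ → V → α) (hm : ∀ t v, m (t + 1) v = F v (m t)) :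
    ∀ v, ∀ t, (Finset.univ.sup fun u => G.dist s u) + 1 ≤ t →
      m t v = m ((Finset.univ.sup fun u => G.dist s u) + 1) v := by
  set ecc := (Finset.univ.sup fun u => G.dist s u) with hecc
  have hb : ∀ u : V, G.dist s u ≤ ecc := fun u =>
    Finset.le_sup (f := fun u => G.dist s u) (Finset.mem_univ u)
  have key : ∀ n : ℕ, ∀ v : V, ecc - G.dist s v ≤ n →
      ∀ t t' : ℕ, n + 1 ≤ t → n + 1 ≤ t' → m t v = m t' v := by
    intro n
    induction n with
    | zero =>
      intro v hv t t' ht ht'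
      obtain ⟨a, rfl⟩ := Nat.exists_eq_add_of_le ht
      obtain ⟨b, rfl⟩ := Nat.exists_eq_add_of_le ht'
      rw [add_comm 1 a, add_comm 1 b, hm, hm]
      apply hF
      intro u hu hlt
      exact absurd (hb u) (by omega)
    | succ n ih =>
      intro v hv t t' ht ht'
      obtain ⟨a, rfl⟩ := Nat.exists_eq_add_of_le (show 1 ≤ t by omega)
      obtain ⟨b, rfl⟩ := Nat.exists_eq_add_of_le (show 1 ≤ t' by omega)
      rw [add_comm 1 a, add_comm 1 b, hm, hm]
      apply hF
      intro u hu hlt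
      exact ih u (by have := hb u; omega) a b (by omega) (by omega)
  intro v t ht
  exact key ecc v (by omega) t (ecc + 1) ht le_rfl
end

section
/- (Stability of the greedy balance-minimizing policy.) Let S be a type of network states, A a finite nonempty type of joint signal actions, step : S → A → S a deterministic transition function, and B, Q : S → ℝ functions with B s ≥ 0 and Q s ≥ 0 for all s. Let ε > 0 and K ≥ 0, and suppose that from every state some action satisfies the drift condition: for all s ∈ S there exists a ∈ A with B (step s a) ≤ B s + K − ε · Q s. Let π : S → A be a greedy policy that at every state minimizes the next-period balance, i.e., B (step s (π s)) ≤ B (step s a) for all s and all a ∈ A. Then along any trajectory s₀, s_{t+1} = step s_t (π s_t), the time-averaged total queue length is uniformly bounded: for every T ≥ 1, (1/T) · Σ_{t=0}^{T−1} Q (s_t) ≤ (K + B s₀) / ε. Hence the policy selected by the network-level coordination algorithm, which minimizes the next-period balance index, stabilizes the network queues. -/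
/-- Stability of the greedy balance-minimizing policy: if from every state some
action satisfies the drift condition, then the greedy policy minimizing the
next-period balance inherits it, and along any of its trajectories the
time-averaged total queue length is uniformly bounded. -/
theorem greedy_balance_minimizing_policy_stabilizes
    {S A : Type*} [Fintype A] [Nonempty A]
    (step : S → A → S) (B Q : S → ℝ)
    (hB : ∀ s, 0 ≤ B s) (hQ : ∀ s, 0 ≤ Q s)
    (ε K : ℝ) (hε : 0 < ε) (hK : 0 ≤ K)
    (hdrift : ∀ s : S, ∃ a : A, B (step s a) ≤ B s + K - ε * Q s)
    (pol : S → A) (hpol : ∀ (s : S) (a : A), B (step s (pol s)) ≤ B (step s a))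
    (s0 : S) (traj : ℕ → S) (h0 : traj 0 = s0)
    (hstep : ∀ t, traj (t + 1) = step (traj t) (pol (traj t))) :
    ∀ T : ℕ, 1 ≤ T →
      (1 / (T : ℝ)) * ∑ t ∈ Finset.range T, Q (traj t) ≤ (K + B s0) / ε := by
  intro T hT
  have hdriftpol : ∀ t, B (traj (t + 1)) ≤ B (traj t) + K - ε * Q (traj t) := by
    intro t
    obtain ⟨a, ha⟩ := hdrift (traj t)
    calc B (traj (t + 1)) = B (step (traj t) (pol (traj t))) := by rw [hstep]
      _ ≤ B (step (traj t) a) := hpol _ _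
      _ ≤ B (traj t) + K - ε * Q (traj t) := ha
  have key : ∀ n : ℕ, ε * ∑ t ∈ Finset.range n, Q (traj t) ≤ B s0 + n * K - B (traj n) := by
    intro n
    induction n with
    | zero => simp [h0]
    | succ n ih =>
      rw [Finset.sum_range_succ, mul_add]
      have := hdriftpol n
      push_cast
      linarith
  have hTpos : (0 : ℝ) < T := by exact_mod_cast hT
  have h1 : ε * ∑ t ∈ Finset.range T, Q (traj t) ≤ B s0 + T * K := by
    have := key T
    have := hB (traj T)
    linarith
  rw [one_div, inv_mul_le_iff₀ hTpos, ← mul_div_assoc, le_div_iff₀ hε]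
  have hB0 : B s0 ≤ T * B s0 := le_mul_of_one_le_left (hB s0) (by exact_mod_cast hT)
  nlinarith [h1]
end

section
/- Among all distributions of a fixed number of vehicles over a fixed number of queues, the balanced distribution minimizes the balance index: for every k ≥ 1 and n ≥ 0, and every q : Fin k → ℕ with Σ_i q i = n, one has (n mod k) · (⌊n/k⌋ + 1)² + (k − n mod k) · ⌊n/k⌋² ≤ Σ_i (q i)². That is, the sum of squares of the queue lengths is minimized exactly when the n vehicles are distributed over the k queues as evenly as possible (each queue holding ⌊n/k⌋ or ⌈n/k⌉ vehicles). -/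
lemma ptwise (x m : ℕ) : (2*m+1)*x ≤ x^2 + m*(m+1) := by
  rcases le_or_gt x m with h | h
  · nlinarith
  · nlinarith

/-- Among all distributions of `n` vehicles over `k ≥ 1` queues, the balanced
distribution (each queue holding `⌊n/k⌋` or `⌈n/k⌉` vehicles) minimizes the
balance index, i.e. the sum of squares of the queue lengths. -/
theorem balanced_distribution_minimizes_balance_index
    (k n : ℕ) (hk : 1 ≤ k) (q : Fin k → ℕ) (hsum : ∑ i, q i = n) :
    (n % k) * (n / k + 1) ^ 2 + (k - n % k) * (n / k) ^ 2 ≤ ∑ i, (q i) ^ 2 := by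
  set m := n / k with hm
  set r := n % k with hr
  have hrk : r < k := Nat.mod_lt _ hk
  have hn : k * m + r = n := Nat.div_add_mod n k
  have key : (2*m+1) * n ≤ (∑ i, (q i)^2) + k * (m*(m+1)) := by
    calc (2*m+1) * n = ∑ i : Fin k, (2*m+1) * q i := by
          rw [← Finset.mul_sum, hsum]
      _ ≤ ∑ i : Fin k, ((q i)^2 + m*(m+1)) := Finset.sum_le_sum (fun i _ => ptwise _ _)
      _ = (∑ i, (q i)^2) + k * (m*(m+1)) := by
          rw [Finset.sum_add_distrib, Finset.sum_const, Finset.card_univ,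
            Fintype.card_fin, smul_eq_mul]
  have htarget : r * (m+1)^2 + (k - r) * m^2 + k * (m*(m+1)) = (2*m+1) * n := by
    have hnZ : (k : ℤ) * m + r = n := by exact_mod_cast hn
    zify [hrk.le]
    linear_combination (2*(m:ℤ)+1) * hnZ
  omega
end
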